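/- arXiv:2007.01163 — 5 statements merged into one kernel-verified Lean document; each statement's English description precedes it below -/
import Mathlib

section
/- Let q be a prime power, F a finite field with q² elements, and δ a generator of the cyclic group F^× of units of F. If i, j ∈ ZMod (q²-1) satisfy i ≢ j (mod q-1), then 1 + δ^{j-i} ≠ 0 in F. -/
/-!
Put `k = (j - i).val` and suppose `δ ^ k = -1`. In a field of order `q²`, `(-1) ^ (q + 1) = 1`
(for odd `q` since `q + 1` is even, for even `q` since the characteristic is `2`), so
`δ ^ (k (q + 1)) = 1`. As `δ` has order `q² - 1 = (q - 1)(q + 1)`, this forces `q - 1 ∣ k`,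
i.e. `i ≡ j (mod q - 1)`.
-/

/-- The canonical reduction ring homomorphism `ZMod (q²-1) → ZMod (q-1)`,
which exists since `(q-1) ∣ (q²-1)`. -/
def red (q : ℕ) : ZMod (q ^ 2 - 1) →+* ZMod (q - 1) :=
  ZMod.castHom (by simpa using Nat.sub_dvd_pow_sub_pow q 1 2) (ZMod (q - 1))

lemma red_apply (q : ℕ) [NeZero (q ^ 2 - 1)] (x : ZMod (q ^ 2 - 1)) :
    red q x = (x.val : ZMod (q - 1)) := by
  rw [red, ZMod.castHom_apply, ZMod.natCast_val]

lemma red_eq_zero_of_sub_one_dvd_val (q : ℕ) [NeZero (q ^ 2 - 1)] {x : ZMod (q ^ 2 - 1)}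
    (hx : q - 1 ∣ x.val) : red q x = 0 := by
  rw [red_apply, ZMod.natCast_eq_zero_iff]
  exact hx

lemma FiniteField.neg_one_pow_of_dvd_card {F : Type*} [Field F] [Fintype F] {q : ℕ}
    (hq : q ∣ Fintype.card F) : (-1 : F) ^ q = -1 := by
  rcases Nat.even_or_odd q with hq_even | hq_odd
  · have : CharP F 2 := ringChar.of_eq <| FiniteField.even_card_iff_char_two.mpr <|
      Nat.mod_eq_zero_of_dvd (hq_even.two_dvd.trans hq)
    simp [CharTwo.neg_eq]
  · exact hq_odd.neg_one_pow

lemma one_lt_of_card_eq_sq {F : Type*} [Field F] [Fintype F] {q : ℕ}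
    (hF : Fintype.card F = q ^ 2) : 1 < q := by
  have h := hF ▸ Fintype.one_lt_card (α := F)
  exact (Nat.one_lt_pow_iff two_ne_zero).mp h

lemma sub_one_dvd_of_pow_eq_neg_one {F : Type*} [Field F] [Fintype F] {q : ℕ}
    (hF : Fintype.card F = q ^ 2) {δ : Fˣ} (hδ : Subgroup.zpowers δ = ⊤) {k : ℕ}
    (hk : ((δ ^ k : Fˣ) : F) = -1) : q - 1 ∣ k := by
  have hord : orderOf δ = (q - 1) * (q + 1) := by
    rw [orderOf_eq_card_of_zpowers_eq_top hδ, Nat.card_units, Nat.card_eq_fintype_card, hF,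
      mul_comm, ← Nat.sq_sub_sq, one_pow]
  have hpow : δ ^ (k * (q + 1)) = 1 := by
    ext
    rw [pow_mul, Units.val_pow_eq_pow_val, hk, Units.val_one, pow_succ,
      FiniteField.neg_one_pow_of_dvd_card (hF ▸ dvd_pow_self q two_ne_zero), neg_one_mul, neg_neg]
  exact Nat.dvd_of_mul_dvd_mul_right (Nat.succ_pos q) (hord ▸ orderOf_dvd_of_pow_eq_one hpow)

theorem stmt1_general (q : ℕ) (F : Type*) [Field F] [Fintype F]
    (hF : Fintype.card F = q ^ 2) (δ : Fˣ) (hδ : Subgroup.zpowers δ = ⊤)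
    (i j : ZMod (q ^ 2 - 1)) (hij : red q i ≠ red q j) :
    (1 : F) + ((δ ^ (j - i).val : Fˣ) : F) ≠ 0 := by
  have : NeZero (q ^ 2 - 1) :=
    ⟨Nat.sub_ne_zero_of_lt (Nat.one_lt_pow two_ne_zero (one_lt_of_card_eq_sq hF))⟩
  intro h
  have hdvd := sub_one_dvd_of_pow_eq_neg_one hF hδ (eq_neg_of_add_eq_zero_right h)
  apply hij
  rw [eq_comm, ← sub_eq_zero, ← map_sub]
  exact red_eq_zero_of_sub_one_dvd_val q hdvd

theorem stmt1 (q : ℕ) (hq : IsPrimePow q) (F : Type*) [Field F] [Fintype F]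
    (hF : Fintype.card F = q ^ 2) (δ : Fˣ) (hδ : Subgroup.zpowers δ = ⊤)
    (i j : ZMod (q ^ 2 - 1)) (hij : red q i ≠ red q j) :
    (1 : F) + ((δ ^ (j - i).val : Fˣ) : F) ≠ 0 :=
  stmt1_general q F hF δ hδ i j hij
end

section
/- Let q be a prime power, F a finite field with q² elements, and δ a generator of F^×. Let i, j ∈ ZMod (q²-1) with i ≢ j (mod q-1), and let k(i,j) = j - y_{i,j}·(q-1) ∈ ZMod (q²-1). Then δ^{k(i,j)} · (δ^i + δ^j)^q = (δ^i + δ^j) · (δ^j)^q in F. -/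
/-!
Since `δ^i + δ^j = δ^i (1 + δ^(j-i)) = δ^(i+x)`, both sides are powers of `δ`, and the claim
reduces to the congruence `k + (i + x) q = (i + x) + j q` of exponents modulo `q² - 1 = ord δ`,
which follows from `k = j - (x + i - j)(q - 1)` by expanding.
-/

section PowZModVal

variable {G : Type*} [Monoid G] {g : G} {n : ℕ}

theorem pow_zmod_val_add [NeZero n] (hg : orderOf g = n) (a b : ZMod n) :
    g ^ (a + b).val = g ^ a.val * g ^ b.val := by
  subst hg
  rw [ZMod.val_add, pow_mod_orderOf, pow_add]

theorem pow_zmod_val_mul_natCast (hg : orderOf g = n) (a : ZMod n) (m : ℕ) :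
    g ^ (a * (m : ZMod n)).val = (g ^ a.val) ^ m := by
  subst hg
  rw [ZMod.val_mul, ZMod.val_natCast, Nat.mul_mod_mod, pow_mod_orderOf, pow_mul]

end PowZModVal

theorem orderOf_eq_card_sub_one_of_zpowers_eq_top {F : Type*} [Field F] [Fintype F] {δ : Fˣ}
    (hδ : Subgroup.zpowers δ = ⊤) : orderOf δ = Fintype.card F - 1 := by
  rw [orderOf_eq_card_of_forall_mem_zpowers (fun g => hδ ▸ Subgroup.mem_top g), Nat.card_units,
    Nat.card_eq_fintype_card]

theorem stmt4_general (q : ℕ) (F : Type*) [Field F] [Fintype F]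
    (hF : Fintype.card F = q ^ 2) (δ : Fˣ) (hδ : Subgroup.zpowers δ = ⊤)
    (i j : ZMod (q ^ 2 - 1))
    (x : ZMod (q ^ 2 - 1))
    (hx : ((δ ^ x.val : Fˣ) : F) = 1 + ((δ ^ (j - i).val : Fˣ) : F))
    (y k : ZMod (q ^ 2 - 1)) (hy : y = x + i - j)
    (hk : k = j - y * ((q - 1 : ℕ) : ZMod (q ^ 2 - 1))) :
    ((δ ^ k.val : Fˣ) : F) * (((δ ^ i.val : Fˣ) : F) + ((δ ^ j.val : Fˣ) : F)) ^ q =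
      (((δ ^ i.val : Fˣ) : F) + ((δ ^ j.val : Fˣ) : F)) * ((δ ^ j.val : Fˣ) : F) ^ q := by
  have hq : 1 < q := by
    have := hF ▸ Fintype.one_lt_card (α := F)
    nlinarith
  have : NeZero (q ^ 2 - 1) := ⟨by have := Nat.one_lt_pow two_ne_zero hq; omega⟩
  have hord : orderOf δ = q ^ 2 - 1 := hF ▸ orderOf_eq_card_sub_one_of_zpowers_eq_top hδ
  have hsum : ((δ ^ i.val : Fˣ) : F) + ((δ ^ j.val : Fˣ) : F) = ((δ ^ (i + x).val : Fˣ) : F) := by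
    rw [pow_zmod_val_add hord, Units.val_mul, hx, mul_add, mul_one, ← Units.val_mul,
      ← pow_zmod_val_add hord, add_sub_cancel]
  have hexp : k + (i + x) * (q : ZMod (q ^ 2 - 1)) = (i + x) + j * (q : ZMod (q ^ 2 - 1)) := by
    rw [hk, hy, Nat.cast_sub hq.le]
    push_cast
    ring
  rw [hsum]
  norm_cast
  rw [← pow_zmod_val_mul_natCast hord, ← pow_zmod_val_mul_natCast hord, ← pow_zmod_val_add hord,
    ← pow_zmod_val_add hord, hexp]

theorem stmt4 (q : ℕ) (hq : IsPrimePow q) (F : Type*) [Field F] [Fintype F]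
    (hF : Fintype.card F = q ^ 2) (δ : Fˣ) (hδ : Subgroup.zpowers δ = ⊤)
    (i j : ZMod (q ^ 2 - 1)) (hij : red q i ≠ red q j)
    (x : ZMod (q ^ 2 - 1))
    (hx : ((δ ^ x.val : Fˣ) : F) = 1 + ((δ ^ (j - i).val : Fˣ) : F))
    (y k : ZMod (q ^ 2 - 1)) (hy : y = x + i - j)
    (hk : k = j - y * ((q - 1 : ℕ) : ZMod (q ^ 2 - 1))) :
    ((δ ^ k.val : Fˣ) : F) * (((δ ^ i.val : Fˣ) : F) + ((δ ^ j.val : Fˣ) : F)) ^ q =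
      (((δ ^ i.val : Fˣ) : F) + ((δ ^ j.val : Fˣ) : F)) * ((δ ^ j.val : Fˣ) : F) ^ q :=
  stmt4_general q F hF δ hδ i j x hx y k hy hk
end

section
/- Let q be a prime power, F a finite field with q² elements, and δ a generator of F^×. Let i, j ∈ ZMod (q²-1) with i ≢ j (mod q-1). Then δ^{k(i,j)} + δ^{l(i,j)} = δ^i + δ^j in F. -/
theorem FiniteField.add_pow_of_card_eq_pow {F : Type*} [Field F] [Fintype F] {q n : ℕ}
    (hq : IsPrimePow q) (hn : n ≠ 0) (hF : Fintype.card F = q ^ n) (a b : F) :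
    (a + b) ^ q = a ^ q + b ^ q := by
  obtain ⟨p, m, hp, hm, rfl⟩ := hq
  obtain ⟨p', _, n', hp', hcard⟩ := FiniteField.card' F
  have hdvd : p ∣ p' ^ (n' : ℕ) := hcard ▸ hF ▸ dvd_pow (dvd_pow_self p hm.ne') hn
  obtain rfl : p = p' :=
    (Nat.prime_dvd_prime_iff_eq hp.nat_prime hp').mp (hp.nat_prime.dvd_of_dvd_pow hdvd)
  have : Fact p.Prime := ⟨hp'⟩
  exact add_pow_char_pow a b p m

theorem AddChar.map_sub_nsmul_mul_pow {A M : Type*} [AddCommGroup A] [Monoid M]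
    (ψ : AddChar A M) (n : ℕ) (u v : A) : ψ (u - n • v) * ψ v ^ n = ψ u := by
  rw [← AddChar.map_nsmul_eq_pow, ← AddChar.map_add_eq_mul, sub_add_cancel]

theorem add_eq_of_add_pow_eq {R : Type*} [CommRing R] [IsDomain R] {q : ℕ} (hq : 0 < q)
    {a b c d k l : R} (hfrob : (a + b) ^ q = a ^ q + b ^ q) (hab : a + b ≠ 0)
    (hc : c * a = a + b) (hd : d * b = a + b)
    (hl : l * c ^ (q - 1) = a) (hk : k * d ^ (q - 1) = b) :
    k + l = a + b := by
  obtain ⟨n, rfl⟩ : ∃ n, q = n + 1 := ⟨q - 1, by omega⟩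
  rw [Nat.add_sub_cancel] at hl hk
  have hca : (a + b) ^ (n + 1) = c ^ (n + 1) * a ^ (n + 1) := by rw [← hc, mul_pow]
  have hdb : (a + b) ^ (n + 1) = d ^ (n + 1) * b ^ (n + 1) := by rw [← hd, mul_pow]
  refine mul_left_cancel₀ (pow_ne_zero (n + 1) hab) ?_
  linear_combination k * hdb + l * hca + (d * b ^ (n + 1)) * hk + (c * a ^ (n + 1)) * hl
    + a ^ (n + 1) * hc + b ^ (n + 1) * hd - (a + b) * hfrob

theorem stmt7_general (q : ℕ) (hq : IsPrimePow q) (F : Type*) [Field F] [Fintype F]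
    (hF : Fintype.card F = q ^ 2) (δ : Fˣ)
    (i j : ZMod (q ^ 2 - 1))
    (x : ZMod (q ^ 2 - 1))
    (hx : ((δ ^ x.val : Fˣ) : F) = 1 + ((δ ^ (j - i).val : Fˣ) : F))
    (y k l : ZMod (q ^ 2 - 1)) (hy : y = x + i - j)
    (hk : k = j - y * ((q - 1 : ℕ) : ZMod (q ^ 2 - 1)))
    (hl : l = i - x * ((q - 1 : ℕ) : ZMod (q ^ 2 - 1))) :
    ((δ ^ k.val : Fˣ) : F) + ((δ ^ l.val : Fˣ) : F) =
      ((δ ^ i.val : Fˣ) : F) + ((δ ^ j.val : Fˣ) : F) := by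
  have : NeZero (q ^ 2 - 1) := ⟨Nat.sub_ne_zero_of_lt (Nat.one_lt_pow two_ne_zero hq.one_lt)⟩
  have hδ : (δ : F) ^ (q ^ 2 - 1) = 1 := hF ▸ FiniteField.pow_card_sub_one_eq_one _ δ.ne_zero
  set ψ := AddChar.zmodChar (q ^ 2 - 1) hδ
  have hψ (a : ZMod (q ^ 2 - 1)) : ((δ ^ a.val : Fˣ) : F) = ψ a := by
    rw [Units.val_pow_eq_pow_val, AddChar.zmodChar_apply]
  simp only [hψ] at hx ⊢
  have hc : ψ x * ψ i = ψ i + ψ j := by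
    rw [hx, add_mul, one_mul, ← AddChar.map_add_eq_mul, sub_add_cancel]
  have hd : ψ y * ψ j = ψ i + ψ j := by
    rw [← hc, ← AddChar.map_add_eq_mul, ← AddChar.map_add_eq_mul, hy, sub_add_cancel]
  have hab : ψ i + ψ j ≠ 0 := by
    rw [← hc, ← hψ, ← hψ, ← Units.val_mul]
    exact Units.ne_zero _
  rw [mul_comm, ← nsmul_eq_mul] at hk hl
  subst hk hl
  exact add_eq_of_add_pow_eq hq.pos
    (FiniteField.add_pow_of_card_eq_pow hq two_ne_zero hF _ _) hab hc hd
    (AddChar.map_sub_nsmul_mul_pow ψ _ _ _) (AddChar.map_sub_nsmul_mul_pow ψ _ _ _)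

theorem stmt7 (q : ℕ) (hq : IsPrimePow q) (F : Type*) [Field F] [Fintype F]
    (hF : Fintype.card F = q ^ 2) (δ : Fˣ) (hδ : Subgroup.zpowers δ = ⊤)
    (i j : ZMod (q ^ 2 - 1)) (hij : red q i ≠ red q j)
    (x : ZMod (q ^ 2 - 1))
    (hx : ((δ ^ x.val : Fˣ) : F) = 1 + ((δ ^ (j - i).val : Fˣ) : F))
    (y k l : ZMod (q ^ 2 - 1)) (hy : y = x + i - j)
    (hk : k = j - y * ((q - 1 : ℕ) : ZMod (q ^ 2 - 1)))
    (hl : l = i - x * ((q - 1 : ℕ) : ZMod (q ^ 2 - 1))) :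
    ((δ ^ k.val : Fˣ) : F) + ((δ ^ l.val : Fˣ) : F) =
      ((δ ^ i.val : Fˣ) : F) + ((δ ^ j.val : Fˣ) : F) :=
  stmt7_general q hq F hF δ i j x hx y k l hy hk hl
end

section
/- Let q be a prime power, F a finite field with q² elements, and δ a generator of F^×. Define R : ZMod (q²-1) × ZMod (q²-1) → ZMod (q²-1) × ZMod (q²-1) by R(i,j) = (k(i,j), l(i,j)) if i ≢ j (mod q-1), and R(i,j) = (i,j) otherwise, and let P be the flip P(i,j) = (j,i). Then Q = P ∘ R satisfies the quantum Yang–Baxter equation Q^{12} ∘ Q^{13} ∘ Q^{23} = Q^{23} ∘ Q^{13} ∘ Q^{12} as maps on ZMod (q²-1) × ZMod (q²-1) × ZMod (q²-1). -/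
/-- `xij q δ i j` is the element `x_{i,j}`, i.e. the unique `x ∈ ZMod (q²-1)` with
`δ^x = 1 + δ^{j-i}` in `F` (chosen by choice; when `δ` is a generator and
`i ≢ j (mod q-1)`, such an `x` exists and is unique). -/
noncomputable def xij (q : ℕ) {F : Type*} [Field F] (δ : Fˣ) (i j : ZMod (q ^ 2 - 1)) :
    ZMod (q ^ 2 - 1) :=
  @Classical.epsilon _ ⟨0⟩ fun x : ZMod (q ^ 2 - 1) =>
    ((δ ^ x.val : Fˣ) : F) = 1 + ((δ ^ (j - i).val : Fˣ) : F)

/-- `y_{i,j} = x_{i,j} + i - j`. -/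
noncomputable def yij (q : ℕ) {F : Type*} [Field F] (δ : Fˣ) (i j : ZMod (q ^ 2 - 1)) :
    ZMod (q ^ 2 - 1) :=
  xij q δ i j + i - j

/-- `k(i,j) = j - y_{i,j}·(q-1)`. -/
noncomputable def kij (q : ℕ) {F : Type*} [Field F] (δ : Fˣ) (i j : ZMod (q ^ 2 - 1)) :
    ZMod (q ^ 2 - 1) :=
  j - yij q δ i j * ((q - 1 : ℕ) : ZMod (q ^ 2 - 1))

/-- `l(i,j) = i - x_{i,j}·(q-1)`. -/
noncomputable def lij (q : ℕ) {F : Type*} [Field F] (δ : Fˣ) (i j : ZMod (q ^ 2 - 1)) :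
    ZMod (q ^ 2 - 1) :=
  i - xij q δ i j * ((q - 1 : ℕ) : ZMod (q ^ 2 - 1))

/-- The map `R(i,j) = (k(i,j), l(i,j))` if `i ≢ j (mod q-1)`, and `R(i,j) = (i,j)`
otherwise. -/
noncomputable def Rmap (q : ℕ) {F : Type*} [Field F] (δ : Fˣ)
    (p : ZMod (q ^ 2 - 1) × ZMod (q ^ 2 - 1)) : ZMod (q ^ 2 - 1) × ZMod (q ^ 2 - 1) :=
  if red q p.1 ≠ red q p.2 then (kij q δ p.1 p.2, lij q δ p.1 p.2) else p

/-- For `S : X × X → X × X`, the map `S¹²` acting as `S` on coordinates 1 and 2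
and as the identity on coordinate 3. -/
def act12 {X : Type*} (S : X × X → X × X) : X × X × X → X × X × X :=
  fun p => ((S (p.1, p.2.1)).1, (S (p.1, p.2.1)).2, p.2.2)

/-- `S²³` acts as `S` on coordinates 2 and 3. -/
def act23 {X : Type*} (S : X × X → X × X) : X × X × X → X × X × X :=
  fun p => (p.1, (S (p.2.1, p.2.2)).1, (S (p.2.1, p.2.2)).2)

/-- `S¹³` acts as `S` on coordinates 1 and 3. -/
def act13 {X : Type*} (S : X × X → X × X) : X × X × X → X × X × X :=
  fun p => ((S (p.1, p.2.2)).1, p.2.1, (S (p.1, p.2.2)).2)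

/-!
Write `x̄ = x ^ q`, the involutive Frobenius automorphism of `F`, and `N x = x * x̄ ∈ 𝔽_q`. The
bijection `i ↦ δ ^ i` from `ZMod (q² - 1)` onto `Fˣ` conjugates `P ∘ R` to the map
`(u, v) ↦ (ρ_s u, ρ_s v)` with `s = u + v`, where `ρ_s t = s t̄ / s̄` (and `ρ_0 = -id`): seeing
`F` as an `𝔽_q`-plane with the anisotropic quadratic form `N`, `ρ_s` is the reflection fixing the
line through `s`. Indeed `δ ^ x_{i,j} = (δ ^ i + δ ^ j) / δ ^ i` turns `k` and `l` into exactly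
this formula, and `i ≡ j (mod q - 1)` means `N (δ ^ i) = N (δ ^ j)`, in which case `ρ_s`
exchanges `δ ^ i` and `δ ^ j`.

The Yang–Baxter equation for this reflection map holds over any field with an involution. The map
preserves `u + v` and commutes with the flip, so reversing the triple exchanges the two sides of
the equation; it therefore suffices to compare first components. Those are `ρ_{t₃} ρ_{t₂} u` and
`ρ_{a₂} ρ_{a₁} u`, and since `ā b · ρ_a ρ_b u = a b̄ · u` they agree as soon as the intermediate
sums satisfy `t₃ t̄₂ = ā₁ a₂`, which holds identically; the cases where a sum vanishes are
handled separately.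
-/

section YangBaxter

variable {X : Type*}

def IsYangBaxter (S : X × X → X × X) : Prop :=
  act12 S ∘ act13 S ∘ act23 S = act23 S ∘ act13 S ∘ act12 S

def tripleReverse (x : X × X × X) : X × X × X := (x.2.2, x.2.1, x.1)

variable {S : X × X → X × X}

lemma act12_tripleReverse (hS : ∀ a b, S (b, a) = (S (a, b)).swap) (x : X × X × X) :
    act12 S (tripleReverse x) = tripleReverse (act23 S x) := by
  obtain ⟨a, b, c⟩ := x
  simp only [act12, act23, tripleReverse, hS b c, Prod.fst_swap, Prod.snd_swap]

lemma act23_tripleReverse (hS : ∀ a b, S (b, a) = (S (a, b)).swap) (x : X × X × X) :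
    act23 S (tripleReverse x) = tripleReverse (act12 S x) := by
  obtain ⟨a, b, c⟩ := x
  simp only [act12, act23, tripleReverse, hS a b, Prod.fst_swap, Prod.snd_swap]

lemma act13_tripleReverse (hS : ∀ a b, S (b, a) = (S (a, b)).swap) (x : X × X × X) :
    act13 S (tripleReverse x) = tripleReverse (act13 S x) := by
  obtain ⟨a, b, c⟩ := x
  simp only [act13, tripleReverse, hS a c, Prod.fst_swap, Prod.snd_swap]

section Sum

variable [AddCancelCommMonoid X]

def tripleSum (x : X × X × X) : X := x.1 + x.2.1 + x.2.2

lemma tripleSum_act12 (hsum : ∀ p, (S p).1 + (S p).2 = p.1 + p.2) (x : X × X × X) :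
    tripleSum (act12 S x) = tripleSum x := by
  simp only [tripleSum, act12, hsum]

lemma tripleSum_act13 (hsum : ∀ p, (S p).1 + (S p).2 = p.1 + p.2) (x : X × X × X) :
    tripleSum (act13 S x) = tripleSum x := by
  simp only [tripleSum, act13, add_right_comm _ x.2.1, hsum]

lemma tripleSum_act23 (hsum : ∀ p, (S p).1 + (S p).2 = p.1 + p.2) (x : X × X × X) :
    tripleSum (act23 S x) = tripleSum x := by
  simp only [tripleSum, act23, add_assoc x.1, hsum]

lemma isYangBaxter_of_fst (hS : ∀ a b, S (b, a) = (S (a, b)).swap)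
    (hsum : ∀ p, (S p).1 + (S p).2 = p.1 + p.2)
    (hfst : ∀ x, (act12 S (act13 S (act23 S x))).1 = (act23 S (act13 S (act12 S x))).1) :
    IsYangBaxter S := by
  funext x
  have h1 := hfst x
  have h3 : (act12 S (act13 S (act23 S x))).2.2 = (act23 S (act13 S (act12 S x))).2.2 := by
    have h := hfst (tripleReverse x)
    rw [act23_tripleReverse hS, act13_tripleReverse hS, act12_tripleReverse hS,
      act12_tripleReverse hS, act13_tripleReverse hS, act23_tripleReverse hS] at h
    exact h.symm
  have htotal : tripleSum (act12 S (act13 S (act23 S x))) =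
      tripleSum (act23 S (act13 S (act12 S x))) := by
    simp only [tripleSum_act12 hsum, tripleSum_act13 hsum, tripleSum_act23 hsum]
  rw [tripleSum, tripleSum, h1, h3] at htotal
  exact Prod.ext h1 (Prod.ext (add_left_cancel (add_right_cancel htotal)) h3)

end Sum

end YangBaxter

section Semiconj

variable {X Y : Type*} {S : X × X → X × X} {S' : Y × Y → Y × Y} {f : X → Y}

lemma prodMap_act12 (h : ∀ a b, Prod.map f f (S (a, b)) = S' (f a, f b))
    (x : X × X × X) :
    Prod.map f (Prod.map f f) (act12 S x) = act12 S' (Prod.map f (Prod.map f f) x) := by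
  obtain ⟨a, b, c⟩ := x
  simp only [act12, Prod.map_apply, ← h, Prod.map_fst, Prod.map_snd]

lemma prodMap_act13 (h : ∀ a b, Prod.map f f (S (a, b)) = S' (f a, f b))
    (x : X × X × X) :
    Prod.map f (Prod.map f f) (act13 S x) = act13 S' (Prod.map f (Prod.map f f) x) := by
  obtain ⟨a, b, c⟩ := x
  simp only [act13, Prod.map_apply, ← h, Prod.map_fst, Prod.map_snd]

lemma prodMap_act23 (h : ∀ a b, Prod.map f f (S (a, b)) = S' (f a, f b))
    (x : X × X × X) :
    Prod.map f (Prod.map f f) (act23 S x) = act23 S' (Prod.map f (Prod.map f f) x) := by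
  obtain ⟨a, b, c⟩ := x
  simp only [act23, Prod.map_apply, ← h, Prod.map_fst, Prod.map_snd]

lemma IsYangBaxter.of_semiconj (h : ∀ a b, Prod.map f f (S (a, b)) = S' (f a, f b))
    (hf : Function.Injective f) (hS' : IsYangBaxter S') :
    IsYangBaxter S := by
  funext x
  apply (hf.prodMap (hf.prodMap hf))
  simp only [Function.comp_apply, prodMap_act12 h, prodMap_act13 h, prodMap_act23 h]
  exact congrFun hS' _

end Semiconj

section ConjReflect

variable {K : Type*} [Field K] [StarRing K]

open Classical in
noncomputable def conjReflect (s t : K) : K :=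
  if s = 0 then -t else s * star t / star s

@[simp]
lemma conjReflect_zero_left (t : K) : conjReflect 0 t = -t := if_pos rfl

lemma conjReflect_of_ne_zero {s : K} (hs : s ≠ 0) (t : K) :
    conjReflect s t = s * star t / star s := if_neg hs

lemma star_mul_conjReflect (s t : K) : star s * conjReflect s t = s * star t := by
  by_cases hs : s = 0
  · simp [hs]
  · rw [conjReflect_of_ne_zero hs]
    field_simp [star_ne_zero.mpr hs]

lemma conjReflect_add (s t t' : K) :
    conjReflect s (t + t') = conjReflect s t + conjReflect s t' := by
  unfold conjReflect
  split_ifs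
  · ring
  · rw [star_add]; ring

lemma conjReflect_neg (s t : K) : conjReflect s (-t) = -conjReflect s t := by
  unfold conjReflect
  split_ifs
  · rfl
  · rw [star_neg]; ring

lemma conjReflect_self (s : K) : conjReflect s s = s := by
  by_cases hs : s = 0
  · simp [hs]
  · rw [conjReflect_of_ne_zero hs, mul_div_assoc, div_self (star_ne_zero.mpr hs), mul_one]

lemma conjReflect_conjReflect (s t : K) : conjReflect s (conjReflect s t) = t := by
  by_cases hs : s = 0
  · simp [hs]
  · have hs' : star s ≠ 0 := star_ne_zero.mpr hs
    rw [conjReflect_of_ne_zero hs, conjReflect_of_ne_zero hs, star_div₀, star_mul', star_star,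
      star_star]
    field_simp

lemma conjReflect_add_conjReflect (v w : K) :
    conjReflect (v + w) v + conjReflect (v + w) w = v + w := by
  rw [← conjReflect_add, conjReflect_self]

lemma conjReflect_mul_star (s t : K) : conjReflect s t * star (conjReflect s t) = t * star t := by
  by_cases hs : s = 0
  · simp [hs]
  · have hs' : star s ≠ 0 := star_ne_zero.mpr hs
    rw [conjReflect_of_ne_zero hs, star_div₀, star_mul']
    simp only [star_star]
    field_simp

lemma conjReflect_add_of_mul_star_eq {p r : K} (h : p * star p = r * star r) :
    conjReflect (p + r) p = r := by
  by_cases hs : p + r = 0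
  · rw [hs, conjReflect_zero_left, eq_neg_of_add_eq_zero_right hs]
  · rw [conjReflect_of_ne_zero hs, div_eq_iff (star_ne_zero.mpr hs), star_add]
    linear_combination h

lemma conjReflect_mul_star_conjReflect (v w : K) :
    conjReflect (v + w) v * star (conjReflect (v + w) w) = star v * w := by
  by_cases hs : v + w = 0
  · rw [hs, conjReflect_zero_left, conjReflect_zero_left, eq_neg_of_add_eq_zero_right hs, neg_neg,
      mul_comm]
  · have hs' : star (v + w) ≠ 0 := star_ne_zero.mpr hs
    rw [conjReflect_of_ne_zero hs, conjReflect_of_ne_zero hs, star_div₀, star_mul', star_star,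
      star_star]
    field_simp

lemma star_mul_mul_conjReflect_conjReflect (a b u : K) :
    star a * b * conjReflect a (conjReflect b u) = a * star b * u := by
  have hb := congrArg star (star_mul_conjReflect b u)
  rw [star_mul', star_mul', star_star, star_star] at hb
  rw [mul_assoc, mul_comm b, ← mul_assoc, star_mul_conjReflect, mul_assoc, mul_comm _ b, hb,
    mul_assoc]

lemma conjReflect_conjReflect_eq_of_mul_star_eq {a b c d : K} (h : a * star b = star c * d)
    (hc : c ≠ 0) (hd : d ≠ 0) (u : K) :
    conjReflect a (conjReflect b u) = conjReflect d (conjReflect c u) := by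
  have hab := star_mul_mul_conjReflect_conjReflect a b u
  have hdc := star_mul_mul_conjReflect_conjReflect d c u
  have h' := congrArg star h
  simp only [star_mul', star_star] at h'
  refine mul_left_cancel₀ (mul_ne_zero (star_ne_zero.mpr hd) hc) ?_
  linear_combination hab - conjReflect a (conjReflect b u) * h' + u * h - hdc

lemma conjReflect_mul_self (t : K) {c : K} (hc : c ≠ 0) :
    conjReflect (t * c) t = t * (c / star c) := by
  by_cases ht : t = 0
  · simp [ht]
  · have hc' : star c ≠ 0 := star_ne_zero.mpr hc
    rw [conjReflect_of_ne_zero (mul_ne_zero ht hc), star_mul']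
    field_simp [star_ne_zero.mpr ht]

noncomputable def conjReflectMap (p : K × K) : K × K :=
  (conjReflect (p.1 + p.2) p.1, conjReflect (p.1 + p.2) p.2)

lemma conjReflectMap_swap (a b : K) : conjReflectMap (b, a) = (conjReflectMap (a, b)).swap := by
  simp only [conjReflectMap, add_comm b a, Prod.swap_prod_mk]

lemma conjReflectMap_fst_add_snd (p : K × K) :
    (conjReflectMap p).1 + (conjReflectMap p).2 = p.1 + p.2 :=
  conjReflect_add_conjReflect p.1 p.2

lemma conjReflect_yangBaxter_identity (u v w : K) :
    (conjReflect (u + conjReflect (v + w) w) u + conjReflect (v + w) v) *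
        star (u + conjReflect (v + w) w) =
      star (u + v) * (conjReflect (u + v) u + w) := by
  have h1 := star_mul_conjReflect (u + conjReflect (v + w) w) u
  have h2 := conjReflect_mul_star_conjReflect v w
  have h3 := conjReflect_add_conjReflect v w
  have h4 := star_mul_conjReflect (u + v) u
  simp only [star_add] at h1 h4 ⊢
  linear_combination h1 + h2 + star u * h3 - h4

lemma conjReflectMap_yangBaxter_fst (x : K × K × K) :
    (act12 conjReflectMap (act13 conjReflectMap (act23 conjReflectMap x))).1 =
      (act23 conjReflectMap (act13 conjReflectMap (act12 conjReflectMap x))).1 := by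
  obtain ⟨u, v, w⟩ := x
  simp only [act12, act13, act23, conjReflectMap]
  have hid := conjReflect_yangBaxter_identity u v w
  have hid_rev := conjReflect_yangBaxter_identity w v u
  rw [add_comm v u, add_comm w (conjReflect _ u), add_comm w v] at hid_rev
  set s := v + w with hs_def
  set a1 := u + v with ha1_def
  set t2 := u + conjReflect s w with ht2_def
  set a2 := conjReflect a1 u + w with ha2_def
  set t3 := conjReflect t2 u + conjReflect s v with ht3_def
  by_cases hs : s = 0
  · have hw : w = -v := eq_neg_of_add_eq_zero_right hs
    have ht2 : t2 = a1 := by rw [ht2_def, hs, conjReflect_zero_left, hw, neg_neg]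
    have ht3 : t3 = a2 := by rw [ht3_def, ht2, hs, conjReflect_zero_left, ha2_def, hw]
    rw [ht2, ht3]
  by_cases ha1 : a1 = 0
  · have hv : v = -u := eq_neg_of_add_eq_zero_right ha1
    have ha2 : a2 = s := by rw [ha2_def, ha1, conjReflect_zero_left, hs_def, hv]
    rw [ha2, ha1, conjReflect_zero_left, ht3_def, hv, conjReflect_neg]
    refine conjReflect_add_of_mul_star_eq ?_
    rw [conjReflect_mul_star, star_neg, neg_mul_neg, conjReflect_mul_star]
  by_cases ha2 : a2 = 0
  · have ht2 : t2 = 0 := by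
      rw [ha2, star_zero, mul_zero] at hid_rev
      exact (add_comm u _).trans ((mul_eq_zero.mp hid_rev.symm).resolve_left (star_ne_zero.mpr hs))
    have hu : u = -conjReflect s w := eq_neg_of_add_eq_zero_left ht2
    have hw : w = -conjReflect a1 u := eq_neg_of_add_eq_zero_right ha2
    have ht3 : t3 = s := by
      rw [ht3_def, ht2, conjReflect_zero_left, hu, neg_neg, add_comm, hs_def,
        conjReflect_add_conjReflect]
    rw [ht3, ht2, ha2, conjReflect_zero_left, conjReflect_zero_left, ← hw, conjReflect_neg, hu,
      conjReflect_neg, conjReflect_conjReflect, neg_neg]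
  exact conjReflect_conjReflect_eq_of_mul_star_eq hid ha1 ha2 u

theorem isYangBaxter_conjReflectMap : IsYangBaxter (conjReflectMap (K := K)) :=
  isYangBaxter_of_fst conjReflectMap_swap conjReflectMap_fst_add_snd conjReflectMap_yangBaxter_fst

end ConjReflect

section PowVal

variable {G : Type*} [Group G] {g : G} {n : ℕ}

lemma pow_val_add [NeZero n] (hg : orderOf g = n) (i j : ZMod n) :
    g ^ (i + j).val = g ^ i.val * g ^ j.val := by
  rw [← pow_add, ZMod.val_add, ← pow_mod_orderOf g (i.val + j.val), hg]

lemma pow_val_sub [NeZero n] (hg : orderOf g = n) (i j : ZMod n) :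
    g ^ (i - j).val = g ^ i.val * (g ^ j.val)⁻¹ :=
  eq_mul_inv_of_mul_eq (by rw [← pow_val_add hg, sub_add_cancel])

lemma pow_val_mul_natCast (hg : orderOf g = n) (i : ZMod n) (m : ℕ) :
    g ^ (i * m).val = (g ^ i.val) ^ m := by
  rw [← pow_mul, pow_eq_pow_iff_modEq, hg, ZMod.val_mul, ZMod.val_natCast]
  exact (Nat.mod_modEq _ n).trans ((Nat.mod_modEq m n).mul_left _)

lemma pow_val_injective [NeZero n] (hg : orderOf g = n) :
    Function.Injective fun i : ZMod n => g ^ i.val := by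
  intro i j hij
  have h := pow_eq_pow_iff_modEq.mp hij
  rw [hg, ← ZMod.natCast_eq_natCast_iff, ZMod.natCast_zmod_val, ZMod.natCast_zmod_val] at h
  exact h

lemma exists_pow_val_eq [NeZero n] (hg : orderOf g = n) (hgen : Subgroup.zpowers g = ⊤) (x : G) :
    ∃ i : ZMod n, g ^ i.val = x := by
  have hfin : IsOfFinOrder g := orderOf_pos_iff.mp (hg ▸ NeZero.pos n)
  obtain ⟨m, rfl⟩ := hfin.mem_powers_iff_mem_zpowers.mpr (hgen ▸ Subgroup.mem_top x)
  exact ⟨m, by rw [ZMod.val_natCast, ← hg, pow_mod_orderOf]⟩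

end PowVal

lemma red_eq_red_iff {G : Type*} [Group G] {g : G} {q : ℕ} [NeZero (q ^ 2 - 1)]
    (hg : orderOf g = q ^ 2 - 1) (i j : ZMod (q ^ 2 - 1)) :
    red q i = red q j ↔ (g ^ i.val) ^ (q + 1) = (g ^ j.val) ^ (q + 1) := by
  have hq : q ^ 2 - 1 = (q - 1) * (q + 1) := by simpa [mul_comm] using Nat.sq_sub_sq q 1
  simp only [red, ZMod.castHom_apply, ← ZMod.natCast_val, ZMod.natCast_eq_natCast_iff]
  rw [← pow_mul, ← pow_mul, pow_eq_pow_iff_modEq, hg]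
  have key : ∀ a b : ℕ, a ≡ b [MOD q - 1] ↔ a * (q + 1) ≡ b * (q + 1) [MOD q ^ 2 - 1] := by
    intro a b
    rw [hq]
    exact ⟨Nat.ModEq.mul_right' _, Nat.ModEq.mul_right_cancel' (Nat.succ_ne_zero q)⟩
  exact key _ _

abbrev frobeniusStarRing (F : Type*) [Field F] [Fintype F] {q : ℕ} (hq : IsPrimePow q)
    (hF : Fintype.card F = q ^ 2) : StarRing F where
  star x := x ^ q
  star_involutive x := by
    change (x ^ q) ^ q = x
    rw [← pow_mul, ← sq, ← hF, FiniteField.pow_card]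
  star_mul x y := by
    change (x * y) ^ q = y ^ q * x ^ q
    rw [mul_pow, mul_comm]
  star_add x y := by
    change (x + y) ^ q = x ^ q + y ^ q
    obtain ⟨p, k, hp, -, rfl⟩ := hq
    have : Fact p.Prime := ⟨hp.nat_prime⟩
    have : CharP F p := charP_of_card_eq_prime_pow (f := k * 2) (by rw [hF, pow_mul])
    exact add_pow_char_pow x y p k

lemma div_star_eq_inv_pow {F : Type*} [Field F] [StarRing F] {q : ℕ}
    (hstar : ∀ x : F, star x = x ^ q) (hq : q ≠ 0) {x : F} (hx : x ≠ 0) :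
    x / star x = (x ^ (q - 1))⁻¹ := by
  obtain ⟨n, rfl⟩ := Nat.exists_eq_add_one.mpr (Nat.pos_of_ne_zero hq)
  rw [hstar, Nat.add_sub_cancel, pow_succ]
  field_simp

lemma units_val_pow_val_xij {F : Type*} [Field F] {q : ℕ} [NeZero (q ^ 2 - 1)] {δ : Fˣ}
    (hδ : Subgroup.zpowers δ = ⊤) (hord : orderOf δ = q ^ 2 - 1) {i j : ZMod (q ^ 2 - 1)}
    (h : 1 + ((δ ^ (j - i).val : Fˣ) : F) ≠ 0) :
    ((δ ^ (xij q δ i j).val : Fˣ) : F) = 1 + ((δ ^ (j - i).val : Fˣ) : F) := by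
  obtain ⟨x₀, hx₀⟩ := exists_pow_val_eq hord hδ (Units.mk0 _ h)
  exact Classical.epsilon_spec (p := fun x : ZMod (q ^ 2 - 1) =>
    ((δ ^ x.val : Fˣ) : F) = 1 + ((δ ^ (j - i).val : Fˣ) : F)) ⟨x₀, congrArg Units.val hx₀⟩

lemma prodMap_swap_Rmap {F : Type*} [Field F] [StarRing F] {q : ℕ} [NeZero (q ^ 2 - 1)]
    (hstar : ∀ x : F, star x = x ^ q) {δ : Fˣ} (hδ : Subgroup.zpowers δ = ⊤)
    (hord : orderOf δ = q ^ 2 - 1) (i j : ZMod (q ^ 2 - 1)) :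
    Prod.map (fun k : ZMod (q ^ 2 - 1) => ((δ ^ k.val : Fˣ) : F))
        (fun k : ZMod (q ^ 2 - 1) => ((δ ^ k.val : Fˣ) : F)) ((Prod.swap ∘ Rmap q δ) (i, j)) =
      conjReflectMap (((δ ^ i.val : Fˣ) : F), ((δ ^ j.val : Fˣ) : F)) := by
  have hq : q ≠ 0 := by
    rintro rfl
    exact NeZero.ne (0 ^ 2 - 1) rfl
  set e : ZMod (q ^ 2 - 1) → F := fun k => ((δ ^ k.val : Fˣ) : F) with he
  change Prod.map e e _ = conjReflectMap (e i, e j)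
  have he_add (a b : ZMod (q ^ 2 - 1)) : e (a + b) = e a * e b := by
    simp only [he, pow_val_add hord, Units.val_mul]
  have he_sub (a b : ZMod (q ^ 2 - 1)) : e (a - b) = e a / e b := by
    simp only [he, pow_val_sub hord, Units.val_mul, Units.val_inv_eq_inv_val, div_eq_mul_inv]
  have he_mul (a : ZMod (q ^ 2 - 1)) : e (a * ((q - 1 : ℕ) : ZMod (q ^ 2 - 1))) = e a ^ (q - 1) :=
    (congrArg Units.val (pow_val_mul_natCast hord a (q - 1))).trans (Units.val_pow_eq_pow_val _ _)
  have he_ne (a : ZMod (q ^ 2 - 1)) : e a ≠ 0 := Units.ne_zero _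
  have hnorm : red q i = red q j ↔ e i * star (e i) = e j * star (e j) := by
    rw [red_eq_red_iff hord, hstar, hstar, ← pow_succ', ← pow_succ', ← Units.val_inj,
      Units.val_pow_eq_pow_val (δ ^ i.val), Units.val_pow_eq_pow_val (δ ^ j.val)]
  simp only [Function.comp_apply, Rmap, Prod.map, Prod.swap, conjReflectMap]
  split_ifs with hij
  · have hs : e i + e j ≠ 0 := by
      intro h
      apply hij
      rw [hnorm, eq_neg_of_add_eq_zero_right h, star_neg, neg_mul_neg]
    have hx : e i * e (xij q δ i j) = e i + e j := by
      have h1 : 1 + e (j - i) ≠ 0 := by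
        rw [he_sub, one_add_div (he_ne i)]
        exact div_ne_zero hs (he_ne i)
      have hxij : e (xij q δ i j) = 1 + e (j - i) := units_val_pow_val_xij hδ hord h1
      rw [hxij, he_sub]
      field_simp [he_ne i]
    have hy : e i + e j = e j * e (yij q δ i j) := by
      rw [← hx, yij, he_sub, he_add]
      field_simp [he_ne j]
    refine Prod.ext ?_ ?_
    · rw [← hx, conjReflect_mul_self _ (he_ne _), div_star_eq_inv_pow hstar hq (he_ne _), lij,
        he_sub, he_mul, div_eq_mul_inv]
    · rw [hy, conjReflect_mul_self _ (he_ne _), div_star_eq_inv_pow hstar hq (he_ne _), kij,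
        he_sub, he_mul, div_eq_mul_inv]
  · have hN : e i * star (e i) = e j * star (e j) := hnorm.mp (not_not.mp hij)
    rw [conjReflect_add_of_mul_star_eq hN, add_comm, conjReflect_add_of_mul_star_eq hN.symm]

theorem stmt10 (q : ℕ) (hq : IsPrimePow q) (F : Type*) [Field F] [Fintype F]
    (hF : Fintype.card F = q ^ 2) (δ : Fˣ) (hδ : Subgroup.zpowers δ = ⊤) :
    act12 (Prod.swap ∘ Rmap q δ) ∘ act13 (Prod.swap ∘ Rmap q δ) ∘
        act23 (Prod.swap ∘ Rmap q δ) =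
      act23 (Prod.swap ∘ Rmap q δ) ∘ act13 (Prod.swap ∘ Rmap q δ) ∘
        act12 (Prod.swap ∘ Rmap q δ) := by
  let _ := frobeniusStarRing F hq hF
  have : NeZero (q ^ 2 - 1) := ⟨Nat.sub_ne_zero_of_lt (by nlinarith [hq.two_le])⟩
  have hord : orderOf δ = q ^ 2 - 1 := by
    classical
    rw [orderOf_eq_card_of_forall_mem_zpowers (fun x => hδ ▸ Subgroup.mem_top x),
      Nat.card_eq_fintype_card, Fintype.card_units, hF]
  exact IsYangBaxter.of_semiconj (prodMap_swap_Rmap (fun _ => rfl) hδ hord)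
    (Units.val_injective.comp (pow_val_injective hord)) isYangBaxter_conjReflectMap
end

section
/- Let G be a group and A, B finite subsets of G such that: taking inverses maps A to A and B to B with no fixed points (a⁻¹ ∈ A and a⁻¹ ≠ a for all a ∈ A, and similarly for B); the product sets AB and BA both have cardinality (#A)·(#B); AB = BA; and no element g of AB satisfies g² = 1. If a, a' ∈ A and b, b' ∈ B satisfy ab = b'a', then the four elements ab, a'b⁻¹, a⁻¹b', a'⁻¹b'⁻¹ of G are pairwise distinct. -/
open scoped Pointwise

theorem stmt13 {G : Type*} [Group G] [DecidableEq G] (A B : Finset G)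
    (hA : ∀ a ∈ A, a⁻¹ ∈ A ∧ a⁻¹ ≠ a) (hB : ∀ b ∈ B, b⁻¹ ∈ B ∧ b⁻¹ ≠ b)
    (hABcard : (A * B).card = A.card * B.card)
    (hBAcard : (B * A).card = A.card * B.card)
    (hABBA : A * B = B * A)
    (hTor : ∀ g ∈ A * B, g * g ≠ 1)
    (a a' : G) (ha : a ∈ A) (ha' : a' ∈ A)
    (b b' : G) (hb : b ∈ B) (hb' : b' ∈ B)
    (hrel : a * b = b' * a') :
    a * b ≠ a' * b⁻¹ ∧ a * b ≠ a⁻¹ * b' ∧ a * b ≠ a'⁻¹ * b'⁻¹ ∧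
      a' * b⁻¹ ≠ a⁻¹ * b' ∧ a' * b⁻¹ ≠ a'⁻¹ * b'⁻¹ ∧ a⁻¹ * b' ≠ a'⁻¹ * b'⁻¹ := by
  have hinj := Finset.card_mul_iff.mp hABcard
  have key : ∀ a₁ ∈ A, ∀ a₂ ∈ A, ∀ b₁ ∈ B, ∀ b₂ ∈ B,
      a₁ * b₁ = a₂ * b₂ → a₁ = a₂ ∧ b₁ = b₂ := by
    intro a₁ h₁ a₂ h₂ b₁ g₁ b₂ g₂ heq
    have := hinj (show ((a₁, b₁) : G × G) ∈ (↑A ×ˢ ↑B : Set (G × G)) from ⟨h₁, g₁⟩)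
      (show ((a₂, b₂) : G × G) ∈ (↑A ×ˢ ↑B : Set (G × G)) from ⟨h₂, g₂⟩) heq
    exact ⟨congrArg Prod.fst this, congrArg Prod.snd this⟩
  have habmem : a * b ∈ A * B := Finset.mul_mem_mul ha hb
  refine ⟨?_, ?_, ?_, ?_, ?_, ?_⟩
  · intro h
    exact (hB b hb).2 ((key a ha a' ha' b hb b⁻¹ (hB b hb).1 h).2).symm
  · intro h
    exact (hA a ha).2 ((key a ha a⁻¹ (hA a ha).1 b hb b' hb' h).1).symm
  · intro h
    have heq : a * b = (a * b)⁻¹ := by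
      calc a * b = a'⁻¹ * b'⁻¹ := h
        _ = (b' * a')⁻¹ := by group
        _ = (a * b)⁻¹ := by rw [hrel]
    exact hTor (a * b) habmem (mul_eq_one_iff_eq_inv.mpr heq)
  · intro h
    obtain ⟨h1, h2⟩ := key a' ha' a⁻¹ (hA a ha).1 b⁻¹ (hB b hb).1 b' hb' h
    have heq : a * b = (a * b)⁻¹ := by
      calc a * b = b' * a' := hrel
        _ = b⁻¹ * a⁻¹ := by rw [h1, ← h2]
        _ = (a * b)⁻¹ := by group
    exact hTor (a * b) habmem (mul_eq_one_iff_eq_inv.mpr heq)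
  · intro h
    exact (hA a' ha').2 ((key a' ha' a'⁻¹ (hA a' ha').1 b⁻¹ (hB b hb).1 b'⁻¹ (hB b' hb').1 h).1).symm
  · intro h
    exact (hB b' hb').2 ((key a⁻¹ (hA a ha).1 a'⁻¹ (hA a' ha').1 b' hb' b'⁻¹ (hB b' hb').1 h).2).symm
end
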